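/- Under the hypotheses of the previous statement, if φ(m) ∈ (0,1) then √(V−1)·Φ(m) ≥ h_{{m}} ≥ (1/κ)·√(V−1)·Φ(m), where Φ(m) = max{φ(m)/√(1−φ(m)²), √(1−φ(m)²)/φ(m)} ≥ 1 and h_{{m}} = (Σ_{u≠m} φ(u)/φ(m))·max{1, φ(m)²/(1−φ(m)²)}. -/
import Mathlib


open Matrix

set_option maxHeartbeats 800000

/-- The smallest eigenvalue of a Hermitian matrix. -/
noncomputable def lamMin {n : ℕ} {A : Matrix (Fin n) (Fin n) ℝ}
    (hA : A.IsHermitian) : ℝ :=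
  ⨅ i, hA.eigenvalues i

/-- The combinatorial Laplacian of the complete graph on `V` vertices:
`L = V·I − J`, where `J` is the all-ones matrix. -/
def cgL (V : ℕ) : Matrix (Fin V) (Fin V) ℝ :=
  (V : ℝ) • (1 : Matrix (Fin V) (Fin V) ℝ) - Matrix.of (fun _ _ => (1 : ℝ))

/-- The quantity `Φ(m) = max{φ(m)/√(1−φ(m)²), √(1−φ(m)²)/φ(m)}`. -/
noncomputable def Phi {V : ℕ} (φ : Fin V → ℝ) (m : Fin V) : ℝ :=
  max (φ m / Real.sqrt (1 - (φ m) ^ 2)) (Real.sqrt (1 - (φ m) ^ 2) / φ m)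

/-- The Cheeger ratio of the singleton cut `{m}`:
`h_{{m}} = (Σ_{u≠m} φ(u)/φ(m)) · max{1, φ(m)²/(1−φ(m)²)}`. -/
noncomputable def hRatio {V : ℕ} (φ : Fin V → ℝ) (m : Fin V) : ℝ :=
  ((∑ u ∈ Finset.univ.erase m, φ u) / φ m) * max 1 ((φ m) ^ 2 / (1 - (φ m) ^ 2))

/-- For the unit positive ground state `φ` of `H = L + W` on the
complete graph, with `W m = 0` the unique smallest eigenvalue, spectral ratio at most
`κ`, and `φ(m) ∈ (0,1)`, one has `√(V−1)·Φ(m) ≥ h_{{m}} ≥ (1/κ)·√(V−1)·Φ(m)`. -/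
theorem cheeger_ratio_bounds {V : ℕ} (hV : 2 ≤ V) (W : Fin V → ℝ) (m : Fin V) (κ : ℝ)
    (hWm : W m = 0) (hmin : ∀ u : Fin V, u ≠ m → 0 < W u)
    (hratio : ∀ u v : Fin V, u ≠ m → v ≠ m → W u ≤ κ * W v)
    (hH : (cgL V + Matrix.diagonal W).IsHermitian)
    (φ : Fin V → ℝ) (hpos : ∀ u, 0 < φ u) (hnorm : ∑ u : Fin V, (φ u) ^ 2 = 1)
    (hEig : (cgL V + Matrix.diagonal W).mulVec φ = lamMin hH • φ)
    (hφm : φ m < 1) :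
    hRatio φ m ≤ Real.sqrt ((V : ℝ) - 1) * Phi φ m ∧
      (1 / κ) * Real.sqrt ((V : ℝ) - 1) * Phi φ m ≤ hRatio φ m := by
  have hmpos := hpos m
  have hφm2 : (0:ℝ) < 1 - φ m ^ 2 := by nlinarith
  set s : ℝ := Real.sqrt (1 - φ m ^ 2) with hsdef
  have hs : 0 < s := Real.sqrt_pos.mpr hφm2
  have hs2 : s ^ 2 = 1 - φ m ^ 2 := Real.sq_sqrt hφm2.le
  have hnt : Nontrivial (Fin V) := Fin.nontrivial_iff_two_le.mpr hV
  obtain ⟨w, hw⟩ := exists_ne m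
  have hκ : 1 ≤ κ := by
    have h1 := hratio w w hw hw
    have h2 := hmin w hw
    nlinarith
  have hκ0 : 0 < κ := by linarith
  set T : ℝ := ∑ v, φ v with hTdef
  set lam : ℝ := lamMin hH with hlamdef
  have key : ∀ u, ((V:ℝ) + W u) * φ u - T = lam * φ u := by
    intro u
    have h := congrFun hEig u
    simp only [Matrix.mulVec, dotProduct, cgL, Matrix.add_apply,
      Matrix.sub_apply, Matrix.smul_apply, Matrix.one_apply, Matrix.diagonal_apply,
      Matrix.of_apply, Pi.smul_apply, smul_eq_mul] at h
    have hsum : ∀ v, (((V:ℝ) * (if u = v then (1:ℝ) else 0) - 1)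
        + (if u = v then W u else 0)) * φ v
        = (if u = v then ((V:ℝ) + W u) * φ v else 0) - φ v := by
      intro v; by_cases hv : u = v <;> simp [hv] <;> ring
    rw [← h, hTdef]
    rw [Finset.sum_congr rfl (fun v _ => hsum v), Finset.sum_sub_distrib,
      Finset.sum_ite_eq Finset.univ u (fun v => ((V:ℝ) + W u) * φ v)]
    simp
  have hT0 : 0 < T := Finset.sum_pos (fun u _ => hpos u) Finset.univ_nonempty
  have keym : ((V:ℝ) - lam) * φ m = T := by
    have h := key m; rw [hWm] at h; linear_combination h
  set A : ℝ := (V:ℝ) - lam with hAdef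
  have hA : 0 < A := by
    rcases lt_trichotomy A 0 with h | h | h
    · nlinarith
    · rw [h] at keym; simp at keym; linarith
    · exact h
  have keyu : ∀ u, u ≠ m → (A + W u) * φ u = T := by
    intro u hu
    have h := key u
    linear_combination h
  have hcomp : ∀ u v : Fin V, u ≠ m → v ≠ m → φ v ≤ κ * φ u := by
    intro u v hu hv
    have h1 := keyu u hu
    have h2 := keyu v hv
    have hWu := hmin u hu
    have hWv := hmin v hv
    have hr := hratio u v hu hv
    have hAu : 0 < A + W u := by linarith
    have hAv : 0 < A + W v := by linarith
    have e1 : φ u = T / (A + W u) := by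
      rw [eq_div_iff hAu.ne', mul_comm]; exact h1
    have e2 : φ v = T / (A + W v) := by
      rw [eq_div_iff hAv.ne', mul_comm]; exact h2
    rw [e1, e2, ← mul_div_assoc, div_le_div_iff₀ hAv hAu]
    nlinarith [mul_nonneg (mul_nonneg hT0.le hA.le) (sub_nonneg.mpr hκ),
      mul_le_mul_of_nonneg_left hr hT0.le]
  set S : ℝ := ∑ u ∈ Finset.univ.erase m, φ u with hSdef
  have hQ : ∑ u ∈ Finset.univ.erase m, φ u ^ 2 = 1 - φ m ^ 2 := by
    have h := Finset.add_sum_erase Finset.univ (fun u => φ u ^ 2) (Finset.mem_univ m)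
    linarith [hnorm, h]
  have hwmem : w ∈ Finset.univ.erase m := by simp [hw]
  have hS0 : 0 < S := Finset.sum_pos (fun u _ => hpos u) ⟨w, hwmem⟩
  have hcard : ((Finset.univ.erase m).card : ℝ) = (V:ℝ) - 1 := by
    rw [Finset.card_erase_of_mem (Finset.mem_univ m), Finset.card_univ, Fintype.card_fin]
    have : 1 ≤ V := by omega
    push_cast [Nat.cast_sub this]
    ring
  have hV1 : (0:ℝ) < (V:ℝ) - 1 := by
    have : (2:ℝ) ≤ V := by exact_mod_cast hV
    linarith
  -- Cauchy-Schwarz upper bound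
  have hCS : S ^ 2 ≤ ((V:ℝ) - 1) * (1 - φ m ^ 2) := by
    have h := Finset.sum_mul_sq_le_sq_mul_sq (Finset.univ.erase m)
      (fun _ => (1:ℝ)) φ
    simp only [one_mul, one_pow, Finset.sum_const, nsmul_eq_mul, mul_one] at h
    rw [hcard, hQ] at h
    exact h
  have hSup : S ≤ Real.sqrt ((V:ℝ) - 1) * s := by
    have h1 : S = Real.sqrt (S ^ 2) := (Real.sqrt_sq hS0.le).symm
    rw [h1, hsdef, ← Real.sqrt_mul hV1.le]
    exact Real.sqrt_le_sqrt hCS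
  -- reverse bound
  have hrev : ((V:ℝ) - 1) * (1 - φ m ^ 2) ≤ κ * S ^ 2 := by
    have hstep : ∀ v ∈ Finset.univ.erase m, ((V:ℝ) - 1) * φ v ≤ κ * S := by
      intro v hv
      have hv' : v ≠ m := (Finset.mem_erase.mp hv).1
      calc ((V:ℝ) - 1) * φ v = ∑ _u ∈ Finset.univ.erase m, φ v := by
            rw [Finset.sum_const, nsmul_eq_mul, hcard]
        _ ≤ ∑ u ∈ Finset.univ.erase m, κ * φ u := by
            refine Finset.sum_le_sum (fun u hu => ?_)
            exact hcomp u v (Finset.mem_erase.mp hu).1 hv'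
        _ = κ * S := by rw [← Finset.mul_sum]
    calc ((V:ℝ) - 1) * (1 - φ m ^ 2) = ∑ v ∈ Finset.univ.erase m, ((V:ℝ) - 1) * φ v ^ 2 := by
          rw [← Finset.mul_sum, hQ]
      _ ≤ ∑ v ∈ Finset.univ.erase m, (κ * S) * φ v := by
          refine Finset.sum_le_sum (fun v hv => ?_)
          have := hstep v hv
          nlinarith [(hpos v).le]
      _ = κ * S ^ 2 := by rw [← Finset.mul_sum, ← hSdef]; ring
  have hSlow : (1 / κ) * Real.sqrt ((V:ℝ) - 1) * s ≤ S := by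
    have h1 : ((V:ℝ) - 1) * (1 - φ m ^ 2) ≤ (κ * S) ^ 2 := by nlinarith
    have h2 : Real.sqrt ((V:ℝ) - 1) * s ≤ κ * S := by
      rw [hsdef, ← Real.sqrt_mul hV1.le]
      calc Real.sqrt (((V:ℝ) - 1) * (1 - φ m ^ 2)) ≤ Real.sqrt ((κ * S) ^ 2) :=
            Real.sqrt_le_sqrt h1
        _ = κ * S := Real.sqrt_sq (by positivity)
    rw [div_mul_eq_mul_div, div_mul_eq_mul_div, div_le_iff₀ hκ0]
    linarith
  -- key identity
  have hΦ0 : 0 < Phi φ m := lt_of_lt_of_le (div_pos hmpos hs) (le_max_left _ _)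
  have hΦφ : Phi φ m * φ m = max (φ m ^ 2 / s) s := by
    unfold Phi
    rw [← hsdef, max_mul_of_nonneg _ _ hmpos.le]
    congr 1
    · field_simp
    · field_simp
  have hMs : max 1 ((φ m) ^ 2 / (1 - (φ m) ^ 2)) * s = max (φ m ^ 2 / s) s := by
    rw [max_mul_of_nonneg _ _ hs.le, one_mul, max_comm]
    congr 1
    rw [← hs2]
    field_simp
  have hId : hRatio φ m * s = S * Phi φ m := by
    unfold hRatio
    rw [← hSdef]
    calc S / φ m * max 1 ((φ m) ^ 2 / (1 - (φ m) ^ 2)) * s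
        = S / φ m * (max 1 ((φ m) ^ 2 / (1 - (φ m) ^ 2)) * s) := by ring
      _ = S / φ m * (Phi φ m * φ m) := by rw [hMs, hΦφ]
      _ = S * Phi φ m := by field_simp
  constructor
  · have h1 : hRatio φ m * s ≤ (Real.sqrt ((V:ℝ) - 1) * Phi φ m) * s := by
      rw [hId]
      calc S * Phi φ m ≤ (Real.sqrt ((V:ℝ) - 1) * s) * Phi φ m :=
            mul_le_mul_of_nonneg_right hSup hΦ0.le
        _ = (Real.sqrt ((V:ℝ) - 1) * Phi φ m) * s := by ring
    exact le_of_mul_le_mul_right h1 hs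
  · have h2 : ((1 / κ) * Real.sqrt ((V:ℝ) - 1) * Phi φ m) * s ≤ hRatio φ m * s := by
      rw [hId]
      calc ((1 / κ) * Real.sqrt ((V:ℝ) - 1) * Phi φ m) * s
          = ((1 / κ) * Real.sqrt ((V:ℝ) - 1) * s) * Phi φ m := by ring
        _ ≤ S * Phi φ m := mul_le_mul_of_nonneg_right hSlow hΦ0.le
    exact le_of_mul_le_mul_right h2 hs
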